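/- arXiv:2010.09860 — 6 statements merged into one kernel-verified Lean document; each statement's English description precedes it below -/
import Mathlib

section
/- (Integral representation.) For every complex s with Re(s) > 0 and every complex z with |z| < 1, the function t ↦ t^{s−1} · z e^{−t} / (1 − z e^{−t}) is integrable on (0, ∞) and ∫₀^∞ t^{s−1} · z e^{−t} / (1 − z e^{−t}) dt = Γ(s) · ∑_{k=1}^∞ z^k / k^s, where t^{s−1} = exp((s−1)·ln t) for t > 0 and Γ is the complex Gamma function. -/
/-!
For `t > 0` the kernel `z e^{-t} / (1 - z e^{-t})` is the geometric series
`∑_{k ≥ 1} z^k e^{-kt}`, and the Mellin transform of `e^{-kt}` at `s` is `Γ(s) / k^s`.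
Integrating termwise is legitimate because `∑ |z|^k Γ(Re s) / k^{Re s}` converges;
the integrand itself is integrable since `|z e^{-t} / (1 - z e^{-t})| ≤ |z| e^{-t} / (1 - |z|)`.
-/

open MeasureTheory Set Complex

section Geometric

variable {K : Type*} [NormedField K] {ξ : K}

theorem hasSum_pnat_geometric_of_norm_lt_one (h : ‖ξ‖ < 1) :
    HasSum (fun n : ℕ+ => ξ ^ (n : ℕ)) (ξ / (1 - ξ)) := by
  have hne : 1 - ξ ≠ 0 := sub_ne_zero.mpr fun h1 => by simp [← h1] at h
  refine hasSum_pnat_iff.mpr ?_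
  rw [pow_zero, div_add_one hne, add_sub_cancel, one_div]
  exact hasSum_geometric_of_norm_lt_one h

theorem norm_div_one_sub_le (h : ‖ξ‖ < 1) :
    ‖ξ / (1 - ξ)‖ ≤ ‖ξ‖ / (1 - ‖ξ‖) := by
  have hden : 1 - ‖ξ‖ ≤ ‖1 - ξ‖ := by simpa using norm_sub_norm_le (1 : K) ξ
  rw [norm_div]
  exact div_le_div_of_nonneg_left (norm_nonneg _) (by linarith) hden

end Geometric

theorem mellinConvergent_of_norm_le_mul_exp_neg {E : Type*} [NormedAddCommGroup E]
    [NormedSpace ℂ E] {f : ℝ → E} {s : ℂ} {C : ℝ}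
    (hf : AEStronglyMeasurable f (volume.restrict (Ioi 0))) (hs : 0 < s.re)
    (hbound : ∀ t ∈ Ioi (0 : ℝ), ‖f t‖ ≤ C * Real.exp (-t)) : MellinConvergent f s := by
  have hcpow :
      AEStronglyMeasurable (fun t : ℝ => (t : ℂ) ^ (s - 1)) (volume.restrict (Ioi 0)) :=
    (measurable_ofReal.pow_const _).aestronglyMeasurable
  refine ((Real.GammaIntegral_convergent hs).const_mul C).mono' (hcpow.smul hf) ?_
  refine (ae_restrict_iff' measurableSet_Ioi).mpr (.of_forall fun t ht => ?_)
  rw [norm_smul, norm_cpow_eq_rpow_re_of_pos ht, sub_re, one_re]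
  calc t ^ (s.re - 1) * ‖f t‖ ≤ t ^ (s.re - 1) * (C * Real.exp (-t)) :=
        mul_le_mul_of_nonneg_left (hbound t ht) (Real.rpow_pos_of_pos ht _).le
    _ = C * (Real.exp (-t) * t ^ (s.re - 1)) := by ring

theorem summable_norm_pow_div_rpow_pnat {z : ℂ} {σ : ℝ} (hz : ‖z‖ < 1) (hσ : 0 ≤ σ) :
    Summable fun k : ℕ+ => ‖z ^ (k : ℕ)‖ / (k : ℝ) ^ σ := by
  have hgeom : Summable fun k : ℕ+ => ‖z‖ ^ (k : ℕ) :=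
    (summable_geometric_of_lt_one (norm_nonneg z) hz).comp_injective PNat.coe_injective
  refine hgeom.of_nonneg_of_le (fun k => by positivity) fun k => ?_
  rw [norm_pow]
  exact div_le_self (by positivity) (Real.one_le_rpow (Nat.one_le_cast.mpr k.pos) hσ)

noncomputable def boseEinsteinKernel (z : ℂ) (t : ℝ) : ℂ :=
  z * Real.exp (-t) / (1 - z * Real.exp (-t))

theorem norm_mul_exp_neg (z : ℂ) (t : ℝ) :
    ‖z * Real.exp (-t)‖ = ‖z‖ * Real.exp (-t) := by
  rw [norm_mul, norm_real, Real.norm_of_nonneg (Real.exp_pos _).le]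

theorem hasSum_boseEinsteinKernel {z : ℂ} {t : ℝ} (hz : ‖z‖ ≤ 1) (ht : 0 < t) :
    HasSum (fun k : ℕ+ => z ^ (k : ℕ) * Real.exp (-(k : ℝ) * t))
      (boseEinsteinKernel z t) := by
  have hlt : ‖z * Real.exp (-t)‖ < 1 := by
    rw [norm_mul_exp_neg]
    calc ‖z‖ * Real.exp (-t) ≤ Real.exp (-t) := mul_le_of_le_one_left (Real.exp_pos _).le hz
      _ < 1 := Real.exp_lt_one_iff.mpr (neg_lt_zero.mpr ht)
  refine (hasSum_pnat_geometric_of_norm_lt_one hlt).congr_fun fun k => ?_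
  rw [mul_pow, ← ofReal_pow, ← Real.exp_nat_mul, neg_mul, mul_neg]

theorem norm_boseEinsteinKernel_le {z : ℂ} {t : ℝ} (hz : ‖z‖ < 1) (ht : 0 ≤ t) :
    ‖boseEinsteinKernel z t‖ ≤ ‖z‖ / (1 - ‖z‖) * Real.exp (-t) := by
  have hle : ‖z * Real.exp (-t)‖ ≤ ‖z‖ := by
    rw [norm_mul_exp_neg]
    exact mul_le_of_le_one_right (norm_nonneg z) (Real.exp_le_one_iff.mpr (by linarith))
  calc ‖boseEinsteinKernel z t‖ ≤ ‖z * Real.exp (-t)‖ / (1 - ‖z * Real.exp (-t)‖) :=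
        norm_div_one_sub_le (hle.trans_lt hz)
    _ ≤ ‖z‖ * Real.exp (-t) / (1 - ‖z‖) := by
        rw [norm_mul_exp_neg] at hle ⊢
        gcongr
    _ = ‖z‖ / (1 - ‖z‖) * Real.exp (-t) := by ring

theorem mellinConvergent_boseEinsteinKernel {z s : ℂ} (hz : ‖z‖ < 1) (hs : 0 < s.re) :
    MellinConvergent (boseEinsteinKernel z) s := by
  refine mellinConvergent_of_norm_le_mul_exp_neg ?_ hs fun t ht =>
    norm_boseEinsteinKernel_le hz (le_of_lt ht)
  unfold boseEinsteinKernel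
  exact (by fun_prop : Measurable _).aestronglyMeasurable

theorem hasSum_mellin_boseEinsteinKernel {z s : ℂ} (hz : ‖z‖ < 1) (hs : 0 < s.re) :
    HasSum (fun k : ℕ+ => Gamma s * (z ^ (k : ℕ) / (k : ℂ) ^ s))
      (mellin (boseEinsteinKernel z) s) := by
  have h := hasSum_mellin (p := fun k : ℕ+ => (k : ℝ)) (fun k => .inr (by positivity)) hs
    (fun t ht => hasSum_boseEinsteinKernel hz.le ht) (summable_norm_pow_div_rpow_pnat hz hs.le)
  convert h using 2 with k
  push_cast
  ring

/-- Bose–Einstein integral representation: for `Re(s) > 0` and `|z| < 1`,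
`∫₀^∞ t^(s-1) · z e^(-t) / (1 - z e^(-t)) dt = Γ(s) · Li_s(z)`. -/
theorem polylog_integral_repr (s z : ℂ) (hs : 0 < s.re) (hz : ‖z‖ < 1) :
    IntegrableOn
      (fun t : ℝ => (t : ℂ) ^ (s - 1) * (z * Real.exp (-t)) / (1 - z * Real.exp (-t)))
      (Set.Ioi 0) ∧
    (∫ t in Set.Ioi (0 : ℝ),
        (t : ℂ) ^ (s - 1) * (z * Real.exp (-t)) / (1 - z * Real.exp (-t)))
      = Complex.Gamma s * ∑' k : ℕ+, z ^ (k : ℕ) / (k : ℂ) ^ s := by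
  have hintegrand :
      (fun t : ℝ => (t : ℂ) ^ (s - 1) * (z * Real.exp (-t)) / (1 - z * Real.exp (-t)))
        = fun t : ℝ => (t : ℂ) ^ (s - 1) • boseEinsteinKernel z t := by
    ext t
    rw [smul_eq_mul, boseEinsteinKernel, mul_div_assoc]
  rw [hintegrand, ← tsum_mul_left]
  exact ⟨mellinConvergent_boseEinsteinKernel hz hs,
    (hasSum_mellin_boseEinsteinKernel hz hs).tsum_eq.symm⟩
end

section
/- For every complex s with Re(s) > 0 and every complex z with z ≠ 0 and z not lying on the real ray [1, ∞), the function t ↦ t^{s−1} / (e^t / z − 1) is integrable on (0, ∞), where t^{s−1} = exp((s−1)·ln t) for t > 0. -/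
open MeasureTheory

/-!
Writing `g t = (e^t / z - 1)⁻¹`, the integrand is the Mellin integrand `t^(s-1) g t`. Because
`z ∉ [1, ∞)` the denominator has no zero on `[0, ∞)` (there `e^t` runs through `[1, ∞)`), so `g` is
continuous, hence bounded, near `0`; and since `z ≠ 0`, `g t ~ z e^(-t)` decays exponentially. Both
ends of the Mellin integral therefore converge as soon as `Re s > 0`.
-/

open Filter Topology Asymptotics Set

theorem mellinConvergent_of_continuousOn_Ici_of_isBigO_exp {E : Type*} [NormedAddCommGroup E]
    [NormedSpace ℂ E] {f : ℝ → E} {a : ℝ} (ha : 0 < a) (hfc : ContinuousOn f (Ici 0))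
    (hf_top : f =O[atTop] fun t => Real.exp (-a * t)) {s : ℂ} (hs : 0 < s.re) :
    MellinConvergent f s := by
  have hf_bot : f =O[𝓝[>] 0] (· ^ (-0 : ℝ)) := by
    have hf0 : Tendsto f (𝓝[>] 0) (𝓝 (f 0)) :=
      ((hfc 0 self_mem_Ici).mono Ioi_subset_Ici_self).tendsto
    simpa only [neg_zero, Real.rpow_zero] using hf0.isBigO_one ℝ
  exact mellinConvergent_of_isBigO_rpow_exp ha
    ((hfc.mono Ioi_subset_Ici_self).locallyIntegrableOn measurableSet_Ioi) hf_top hf_bot hs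

namespace Complex

theorem exp_div_sub_one_ne_zero {z : ℂ} (hz : ¬ (z.im = 0 ∧ 1 ≤ z.re)) {t : ℝ} (ht : 0 ≤ t) :
    exp t / z - 1 ≠ 0 := by
  intro h
  have hz_eq : z = (Real.exp t : ℂ) := by
    rcases eq_or_ne z 0 with rfl | hz0
    · simp at h
    · rw [ofReal_exp, ← div_eq_one_iff_eq hz0 |>.mp (sub_eq_zero.mp h)]
  exact hz ⟨by rw [hz_eq, ofReal_im], by rw [hz_eq, ofReal_re]; exact Real.one_le_exp ht⟩

theorem continuousOn_inv_exp_div_sub_one {z : ℂ} (hz : ¬ (z.im = 0 ∧ 1 ≤ z.re)) :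
    ContinuousOn (fun t : ℝ => (exp t / z - 1)⁻¹) (Ici 0) :=
  ((continuous_ofReal.cexp.div_const z).sub continuous_const).continuousOn.inv₀
    fun _ ht => exp_div_sub_one_ne_zero hz ht

theorem isBigO_exp_exp_div_sub_one_atTop {z : ℂ} (hz0 : z ≠ 0) :
    (fun t : ℝ => exp t) =O[atTop] fun t : ℝ => exp t / z - 1 := by
  have hz : 0 < ‖z‖ := norm_pos_iff.mpr hz0
  refine IsBigO.of_bound (2 * ‖z‖) ?_
  filter_upwards [Real.tendsto_exp_atTop.eventually_ge_atTop (2 * ‖z‖)] with t ht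
  have hnorm : ‖exp (t : ℂ) / z‖ = Real.exp t / ‖z‖ := by
    rw [norm_div, norm_exp_ofReal]
  have hlower : Real.exp t / ‖z‖ - 1 ≤ ‖exp (t : ℂ) / z - 1‖ := by
    simpa [hnorm] using norm_sub_norm_le (exp (t : ℂ) / z) 1
  rw [norm_exp_ofReal]
  rw [div_sub_one hz.ne', div_le_iff₀ hz] at hlower
  -- `e^t ≥ 2‖z‖` turns `e^t / ‖z‖ - 1` into at least `e^t / (2‖z‖)`
  nlinarith

theorem isBigO_inv_exp_div_sub_one_atTop {z : ℂ} (hz0 : z ≠ 0) :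
    (fun t : ℝ => (exp t / z - 1)⁻¹) =O[atTop] fun t => Real.exp (-1 * t) := by
  refine ((isBigO_exp_exp_div_sub_one_atTop hz0).inv_rev
    (Eventually.of_forall fun t h => absurd h (exp_ne_zero _))).trans ?_
  refine IsBigO.of_bound 1 (Eventually.of_forall fun t => ?_)
  simp [Real.exp_neg]

end Complex

/-- For `Re(s) > 0` and `z ≠ 0` not on the real ray `[1, ∞)`, the integrand
`t ↦ t^(s-1) / (e^t / z - 1)` is integrable on `(0, ∞)`. -/
theorem polylog_continuation_integrable (s z : ℂ) (hs : 0 < s.re) (hz0 : z ≠ 0)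
    (hz : ¬ (z.im = 0 ∧ 1 ≤ z.re)) :
    IntegrableOn (fun t : ℝ => (t : ℂ) ^ (s - 1) / (Complex.exp t / z - 1)) (Set.Ioi 0) := by
  have h := mellinConvergent_of_continuousOn_Ici_of_isBigO_exp one_pos
    (Complex.continuousOn_inv_exp_div_sub_one hz) (Complex.isBigO_inv_exp_div_sub_one_atTop hz0) hs
  simpa only [MellinConvergent, smul_eq_mul, div_eq_mul_inv] using h
end

section
/- For every complex number s that is not a positive integer and every complex number u with |u| < 2π, the function k ↦ ζ(s−k) · u^k / k! (k ranging over the natural numbers) is summable, where ζ is the Riemann zeta function. -/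
/-!
For large `k` the point `w = 1 - s + k` has `re w ≥ 2`, so the functional equation
`ζ(1 - w) = 2 (2π)^(-w) Γ(w) cos(πw/2) ζ(w)` together with `|Γ(w)| ≤ Γ(re w)`,
`|cos(πw/2)| ≤ exp(π |im w| / 2)` and `|ζ(w)| ≤ ζ(2)` gives
`‖ζ(s - k)‖ ≤ C (k + m)! / (2π)^k`. The `k`-th term is then at most
`C (k + m)! / k! · (‖u‖ / 2π)^k`, a polynomial times a convergent geometric sequence.
-/

open Real
open scoped Nat

lemma Complex.norm_Gamma_le_Gamma_re {w : ℂ} (hw : 0 < w.re) :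
    ‖Complex.Gamma w‖ ≤ Real.Gamma w.re := by
  rw [Complex.Gamma_eq_integral hw, Real.Gamma_eq_integral hw, Complex.GammaIntegral]
  refine (MeasureTheory.norm_integral_le_integral_norm _).trans_eq <|
    MeasureTheory.setIntegral_congr_fun measurableSet_Ioi fun x hx => ?_
  rw [norm_mul, Complex.norm_real, Real.norm_of_nonneg (exp_pos _).le,
    Complex.norm_cpow_eq_rpow_re_of_pos hx, Complex.sub_re, Complex.one_re]

lemma Complex.norm_cos_le_exp_abs_im (z : ℂ) : ‖Complex.cos z‖ ≤ Real.exp |z.im| := by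
  calc ‖Complex.cos z‖
      = ‖Complex.exp (z * Complex.I) + Complex.exp (-z * Complex.I)‖ / 2 := by
        rw [Complex.cos, norm_div, Complex.norm_ofNat]
    _ ≤ (Real.exp |z.im| + Real.exp |z.im|) / 2 := by
        gcongr
        refine (norm_add_le _ _).trans (add_le_add ?_ ?_) <;>
          rw [Complex.norm_exp] <;> gcongr <;> simp [neg_le_abs, le_abs_self]
    _ = Real.exp |z.im| := by ring

lemma Real.Gamma_le_factorial {x : ℝ} {n : ℕ} (h2x : 2 ≤ x) (hxn : x ≤ n + 1) :
    Real.Gamma x ≤ n ! := by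
  rw [← Real.Gamma_nat_eq_factorial]
  exact Real.Gamma_strictMonoOn_Ici.monotoneOn h2x (h2x.trans hxn) hxn

lemma norm_riemannZeta_le_tsum_norm_term {x : ℝ} (hx : 1 < x) {w : ℂ} (hxw : x ≤ w.re) :
    ‖riemannZeta w‖ ≤ ∑' n, ‖LSeries.term 1 x n‖ := by
  have hsum : Summable fun n => ‖LSeries.term 1 x n‖ :=
    (LSeriesSummable_one_iff.mpr (by simpa using hx)).norm
  have hle := LSeries.norm_term_le_of_re_le_re 1 (s := x) (s' := w) (by simpa using hxw)
  rw [← LSeries_one_eq_riemannZeta (hx.trans_le hxw), LSeries]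
  exact (norm_tsum_le_tsum_norm (hsum.of_nonneg_of_le (fun _ => norm_nonneg _) hle)).trans
    (Summable.tsum_le_tsum hle (hsum.of_nonneg_of_le (fun _ => norm_nonneg _) hle) hsum)

lemma norm_riemannZeta_one_sub_le {w : ℂ} (hw : 2 ≤ w.re) :
    ‖riemannZeta (1 - w)‖ ≤ 2 * (2 * π) ^ (-w.re) * Real.Gamma w.re *
      Real.exp (π * |w.im| / 2) * ∑' n, ‖LSeries.term 1 2 n‖ := by
  have hw_ne_neg_nat (n : ℕ) : w ≠ -n := fun h => by
    have := congrArg Complex.re h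
    simp only [Complex.neg_re, Complex.natCast_re] at this
    linarith [n.cast_nonneg (α := ℝ)]
  have hw_ne_one : w ≠ 1 := fun h => by norm_num [h] at hw
  have hcpow : ‖(2 * (π : ℂ)) ^ (-w)‖ = (2 * π) ^ (-w.re) := by
    rw [show 2 * (π : ℂ) = ((2 * π : ℝ) : ℂ) by push_cast; ring,
      Complex.norm_cpow_eq_rpow_re_of_pos (by positivity), Complex.neg_re]
  have hcos : ‖Complex.cos (π * w / 2)‖ ≤ Real.exp (π * |w.im| / 2) :=
    (Complex.norm_cos_le_exp_abs_im _).trans_eq <| by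
      simp [abs_mul, abs_div, abs_of_pos pi_pos, mul_div_assoc]
  rw [riemannZeta_one_sub hw_ne_neg_nat hw_ne_one]
  simp only [norm_mul, Complex.norm_ofNat, hcpow]
  gcongr
  · exact Complex.norm_Gamma_le_Gamma_re (by linarith)
  · exact norm_riemannZeta_le_tsum_norm_term one_lt_two (by simpa using hw)

lemma eventually_norm_riemannZeta_sub_natCast_le (s : ℂ) :
    ∃ C : ℝ, ∃ m : ℕ, ∀ᶠ k : ℕ in Filter.atTop,
      ‖riemannZeta (s - k)‖ ≤ C * (k + m)! / (2 * π) ^ k := by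
  obtain ⟨m, hm⟩ := exists_nat_ge (1 - s.re)
  refine ⟨2 * (2 * π) ^ (s.re - 1) * Real.exp (π * |s.im| / 2) * ∑' n, ‖LSeries.term 1 2 n‖, m,
    ?_⟩
  filter_upwards [Filter.eventually_ge_atTop ⌈1 + s.re⌉₊] with k hk
  have hk : 1 + s.re ≤ k := Nat.ceil_le.mp hk
  set w : ℂ := 1 - s + k
  have hw_re : w.re = 1 - s.re + k := by simp [w]
  have hw_im : |w.im| = |s.im| := by simp [w]
  have h2π : 0 < 2 * π := by positivity
  have hcpow : (2 * π) ^ (-w.re) = (2 * π) ^ (s.re - 1) / (2 * π) ^ k := by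
    rw [hw_re, show -(1 - s.re + k) = s.re - 1 + -(k : ℝ) by ring, rpow_add h2π,
      rpow_neg h2π.le, rpow_natCast, div_eq_mul_inv]
  calc ‖riemannZeta (s - k)‖ = ‖riemannZeta (1 - w)‖ := by congr 2; ring
    _ ≤ 2 * (2 * π) ^ (-w.re) * Real.Gamma w.re * Real.exp (π * |w.im| / 2) *
        ∑' n, ‖LSeries.term 1 2 n‖ := norm_riemannZeta_one_sub_le (by linarith)
    _ ≤ 2 * (2 * π) ^ (-w.re) * (k + m)! * Real.exp (π * |w.im| / 2) *
        ∑' n, ‖LSeries.term 1 2 n‖ := by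
      gcongr
      exact Real.Gamma_le_factorial (by linarith) (by push_cast; linarith)
    _ = _ := by rw [hcpow, hw_im]; ring

theorem polylog_series2_tail_summable_general (s : ℂ) (u : ℂ)
    (hu : ‖u‖ < 2 * π) :
    Summable (fun k : ℕ => riemannZeta (s - k) * u ^ k / (Nat.factorial k)) := by
  obtain ⟨C, m, hC⟩ := eventually_norm_riemannZeta_sub_natCast_le s
  set r := ‖u‖ / (2 * π)
  have hr : ‖r‖ < 1 := by
    rwa [norm_div, norm_norm, Real.norm_of_nonneg (by positivity), div_lt_one (by positivity)]
  refine Summable.of_norm_bounded_eventually_nat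
    ((summable_descFactorial_mul_geometric_of_norm_lt_one m hr).mul_left C) ?_
  filter_upwards [hC] with k hk
  have hfact : ((k + m)! : ℝ) = k ! * (k + m).descFactorial m := by
    have := Nat.factorial_mul_descFactorial (Nat.le_add_left m k)
    rw [Nat.add_sub_cancel] at this
    exact_mod_cast this.symm
  calc ‖riemannZeta (s - k) * u ^ k / (k ! : ℂ)‖ = ‖riemannZeta (s - k)‖ * ‖u‖ ^ k / k ! := by
        rw [norm_div, norm_mul, norm_pow, Complex.norm_natCast]
    _ ≤ C * (k + m)! / (2 * π) ^ k * ‖u‖ ^ k / k ! := by gcongr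
    _ = C * ((k + m).descFactorial m * r ^ k) := by
        rw [hfact, div_pow]; field_simp

/-- For `s` not a positive integer and `|u| < 2π`, the series `∑ ζ(s-k) u^k / k!` is summable. -/
theorem polylog_series2_tail_summable (s : ℂ) (hs : ∀ n : ℕ+, s ≠ (n : ℂ)) (u : ℂ)
    (hu : ‖u‖ < 2 * π) :
    Summable (fun k : ℕ => riemannZeta (s - k) * u ^ k / (Nat.factorial k)) :=
  polylog_series2_tail_summable_general s u hu
end

section
/- (Pole cancellation limit.) Let m be a natural number and let w be a complex number not lying on the closed negative real axis (−∞, 0]. Then, as τ → 0 through nonzero complex values, ζ(1+τ) + (−1)^m · m! · Γ(−m−τ) · w^τ tends to H_m − Log w, where ζ is the Riemann zeta function, Γ is the complex Gamma function, w^τ = exp(τ · Log w) with Log the principal complex logarithm, and H_m = ∑_{j=1}^{m} 1/j is the m-th harmonic number (H_0 = 0). -/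
/-!
By the reflection formula, applied at `-τ - m` and at `-τ`,
`(-1)^m m! Γ(-m-τ) w^τ = -G(τ)/τ` with `G(τ) = m! Γ(1+τ) Γ(1-τ) w^τ / Γ(m+1+τ)`.
`G` is holomorphic at `0` with `G(0) = 1`, and `Γ'(1) = -γ`, `Γ'(m+1) = m! (H_m - γ)` give
`G'(0) = γ + Log w - H_m`. Since `ζ(1+τ) = 1/τ + γ + o(1)`, the sum tends to `γ - G'(0)`.
-/

open Filter Topology Complex
open scoped Nat Real

local notation "γ" => Real.eulerMascheroniConstant

namespace Complex

theorem Gamma_sub_nat_mul_Gamma_one_sub_add_nat (z : ℂ) (n : ℕ) :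
    Gamma (z - n) * Gamma (1 - z + n) = (-1) ^ n * (Gamma z * Gamma (1 - z)) := by
  have hsin : sin (π * (z - n)) = (-1) ^ n * sin (π * z) := by
    rw [mul_sub, mul_comm (π : ℂ) n]
    exact sin_antiperiodic.sub_nat_mul_eq n
  rw [show 1 - z + n = 1 - (z - n) by ring, Gamma_mul_Gamma_one_sub, Gamma_mul_Gamma_one_sub,
    hsin, div_eq_mul_inv, div_eq_mul_inv, mul_inv, ← inv_pow, inv_neg, inv_one]
  ring

theorem hasDerivAt_Gamma_nat_add_one_add (n : ℕ) :
    HasDerivAt (fun τ : ℂ ↦ Gamma (n + 1 + τ)) (n ! * (-γ + harmonic n)) 0 :=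
  HasDerivAt.comp_const_add _ _ (by simpa using hasDerivAt_Gamma_nat n)

end Complex

noncomputable def gammaRegularPart (m : ℕ) (w τ : ℂ) : ℂ :=
  m ! * Gamma (1 + τ) * Gamma (1 - τ) * w ^ τ / Gamma (m + 1 + τ)

theorem gammaRegularPart_zero (m : ℕ) (w : ℂ) : gammaRegularPart m w 0 = 1 := by
  have hfac : (m ! : ℂ) ≠ 0 := by exact_mod_cast m.factorial_ne_zero
  simp [gammaRegularPart, Complex.Gamma_nat_eq_factorial, hfac]

theorem hasDerivAt_gammaRegularPart (m : ℕ) {w : ℂ} (hw : w ≠ 0) :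
    HasDerivAt (gammaRegularPart m w) (γ + log w - harmonic m) 0 := by
  have hplus : HasDerivAt (fun τ : ℂ ↦ Gamma (1 + τ)) (-γ) 0 :=
    HasDerivAt.comp_const_add (f := Gamma) 1 0 (by simpa using Complex.hasDerivAt_Gamma_one)
  have hminus : HasDerivAt (fun τ : ℂ ↦ Gamma (1 - τ)) γ 0 := by
    simpa using (HasDerivAt.comp_const_sub (f := Gamma) 1 0
      (by simpa using Complex.hasDerivAt_Gamma_one)).congr_deriv (neg_neg _)
  have hpow : HasDerivAt (fun τ : ℂ ↦ w ^ τ) (log w) 0 := by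
    simpa using (hasDerivAt_id (0 : ℂ)).const_cpow (c := w) (Or.inl hw)
  have hfac : (m ! : ℂ) ≠ 0 := by exact_mod_cast m.factorial_ne_zero
  have hden : Gamma (m + 1 + 0) ≠ 0 := by simpa [Complex.Gamma_nat_eq_factorial] using hfac
  refine ((((hplus.const_mul (m ! : ℂ)).fun_mul hminus).fun_mul hpow).fun_div
    (hasDerivAt_Gamma_nat_add_one_add m) hden).congr_deriv ?_
  simp [Complex.Gamma_nat_eq_factorial]
  field_simp
  ring

theorem eventually_neg_one_pow_mul_Gamma_neg_nat_sub_eq (m : ℕ) (w : ℂ) :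
    ∀ᶠ τ in 𝓝[≠] (0 : ℂ),
      (-1) ^ m * m ! * Gamma (-(m : ℂ) - τ) * w ^ τ = -gammaRegularPart m w τ / τ := by
  have hden : ∀ᶠ τ in 𝓝 (0 : ℂ), Gamma (m + 1 + τ) ≠ 0 :=
    (hasDerivAt_Gamma_nat_add_one_add m).continuousAt.eventually_ne
      (by simpa [Complex.Gamma_nat_eq_factorial] using m.factorial_ne_zero)
  filter_upwards [nhdsWithin_le_nhds hden, self_mem_nhdsWithin] with τ hΓ (hτ : τ ≠ 0)
  have hrefl := Gamma_sub_nat_mul_Gamma_one_sub_add_nat (-τ) m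
  rw [show -τ - m = -m - τ by ring, show 1 - -τ + m = m + 1 + τ by ring, sub_neg_eq_add]
    at hrefl
  have hsign : ((-1 : ℂ) ^ m) ^ 2 = 1 := by rw [← pow_mul, mul_comm, pow_mul]; simp
  have hshift : Gamma (1 - τ) = -τ * Gamma (-τ) := by
    simpa [sub_eq_neg_add] using Gamma_add_one (-τ) (neg_ne_zero.mpr hτ)
  rw [gammaRegularPart, hshift]
  field_simp
  linear_combination ((-1) ^ m * m ! * w ^ τ) * hrefl
    + (m ! * w ^ τ * Gamma (-τ) * Gamma (1 + τ)) * hsign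

theorem tendsto_riemannZeta_one_add_sub_inv :
    Tendsto (fun τ : ℂ ↦ riemannZeta (1 + τ) - τ⁻¹) (𝓝[≠] 0) (𝓝 γ) := by
  have h : Tendsto (fun τ : ℂ ↦ 1 + τ) (𝓝[≠] 0) (𝓝[≠] 1) := by
    rw [Tendsto, map_add_left_nhdsNE, add_zero]
  simpa [Function.comp_def] using tendsto_riemannZeta_sub_one_div.comp h

/-- Pole cancellation: as `τ → 0` (through nonzero values),
`ζ(1+τ) + (-1)^m m! Γ(-m-τ) w^τ → H_m - Log w`, for `w` off the closed negative real axis. -/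
theorem polylog_pole_cancellation (m : ℕ) (w : ℂ) (hw : ¬ (w.im = 0 ∧ w.re ≤ 0)) :
    Tendsto
      (fun τ : ℂ => riemannZeta (1 + τ)
        + (-1 : ℂ) ^ m * (Nat.factorial m) * Complex.Gamma (-(m : ℂ) - τ) * w ^ τ)
      (nhdsWithin 0 {(0 : ℂ)}ᶜ)
      (nhds ((harmonic m : ℂ) - Complex.log w)) := by
  have hw0 : w ≠ 0 := by
    rintro rfl
    simp at hw
  have hslope : Tendsto (fun τ ↦ τ⁻¹ * (gammaRegularPart m w τ - 1)) (𝓝[≠] 0)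
      (𝓝 (γ + log w - harmonic m)) := by
    simpa [gammaRegularPart_zero] using (hasDerivAt_gammaRegularPart m hw0).tendsto_slope_zero
  have hlim := tendsto_riemannZeta_one_add_sub_inv.sub hslope
  rw [show (γ : ℂ) - (γ + log w - harmonic m) = harmonic m - log w by ring] at hlim
  refine hlim.congr' ?_
  filter_upwards [eventually_neg_one_pow_mul_Gamma_neg_nat_sub_eq m w, self_mem_nhdsWithin]
    with τ hτ (hτ0 : τ ≠ 0)
  rw [hτ]
  field_simp
  ring
end

section
/- Let m be a natural number. As z → −m through complex values z ≠ −m, the quantity Γ(z) − (−1)^m / (m! · (z + m)) tends to (−1)^m (H_m − γ) / m!, where Γ is the complex Gamma function, H_m = ∑_{j=1}^{m} 1/j is the m-th harmonic number (H_0 = 0), and γ is the Euler–Mascheroni constant. -/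
/-!
Write `R_m(z) = Γ(z) - (-1)^m/(m!(z + m))` for the regular part at `-m`. At `0`,
`R_0(z) = (Γ(z + 1) - Γ(1))/z` is a difference quotient of `Γ` at `1`, so it tends to
`Γ'(1) = -γ`. The functional equation `Γ(z) = Γ(z + 1)/z` moves the pole at `-(m + 1)` to the
pole at `-m`: `R_{m+1}(z) = (R_m(z + 1) + (-1)^m/(m + 1)!)/z`, and letting `z → -(m + 1)` turns
`H_m` into `H_m + 1/(m + 1) = H_{m+1}`.
-/

open Filter Topology Complex Nat

theorem tendsto_Gamma_sub_inv_nhdsNE_zero :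
    Tendsto (fun z : ℂ => Gamma z - 1 / z) (𝓝[≠] 0) (𝓝 (-Real.eulerMascheroniConstant)) := by
  have hderiv : HasDerivAt (fun z : ℂ => Gamma (z + 1)) (-Real.eulerMascheroniConstant) 0 := by
    simpa using (zero_add (1 : ℂ) ▸ hasDerivAt_Gamma_one).comp_add_const 0 1
  refine (hasDerivAt_iff_tendsto_slope.mp hderiv).congr' ?_
  filter_upwards [self_mem_nhdsWithin] with z (hz : z ≠ 0)
  rw [slope_def_field, Gamma_add_one z hz]
  simp only [zero_add, Gamma_one, sub_zero, one_div]
  field_simp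

theorem Gamma_sub_pole_succ_eq (m : ℕ) {z : ℂ} (hz : z ≠ 0) (hzm : z ≠ -(m + 1)) :
    Gamma z - (-1) ^ (m + 1) / ((m + 1)! * (z + (m + 1 : ℕ))) =
      (Gamma (z + 1) - (-1) ^ m / (m ! * (z + 1 + m)) + (-1) ^ m / (m + 1)!) / z := by
  have hzm₁ : z + (m + 1) ≠ 0 := fun h => hzm (by linear_combination h)
  have hzm₂ : z + 1 + m ≠ 0 := fun h => hzm (by linear_combination h)
  rw [Gamma_add_one z hz, Nat.factorial_succ]
  push_cast
  field_simp
  ring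

/-- Laurent expansion of `Γ` at `-m`: as `z → -m` (through `z ≠ -m`),
`Γ(z) - (-1)^m/(m!(z+m)) → (-1)^m (H_m - γ)/m!`. -/
theorem gamma_sub_pole_tendsto (m : ℕ) :
    Tendsto
      (fun z : ℂ => Complex.Gamma z - (-1 : ℂ) ^ m / ((Nat.factorial m) * (z + m)))
      (nhdsWithin (-(m : ℂ)) {(-(m : ℂ))}ᶜ)
      (nhds ((-1 : ℂ) ^ m * ((harmonic m : ℂ) - (Real.eulerMascheroniConstant : ℂ))
        / (Nat.factorial m))) := by
  induction m with
  | zero => simpa using tendsto_Gamma_sub_inv_nhdsNE_zero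
  | succ m ih =>
    have hpole_ne : -((m + 1 : ℕ) : ℂ) ≠ 0 := neg_ne_zero.mpr (Nat.cast_ne_zero.mpr m.succ_ne_zero)
    have hpole_shift : -((m + 1 : ℕ) : ℂ) + 1 = -m := by push_cast; ring
    have hlim := ((ih.comp (hpole_shift ▸ map_add_right_nhdsNE.le)).add_const
      ((-1 : ℂ) ^ m / (m + 1)!)).div (tendsto_nhdsWithin_of_tendsto_nhds tendsto_id) hpole_ne
    have hconst : ((-1 : ℂ) ^ m * (harmonic m - Real.eulerMascheroniConstant) / m ! +
        (-1) ^ m / (m + 1)!) / -((m + 1 : ℕ) : ℂ) =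
        (-1) ^ (m + 1) * (harmonic (m + 1) - Real.eulerMascheroniConstant) / (m + 1)! := by
      rw [harmonic_succ, Nat.factorial_succ]
      push_cast
      field_simp
      ring
    rw [← hconst]
    refine hlim.congr' ?_
    filter_upwards [self_mem_nhdsWithin, nhdsWithin_le_nhds (eventually_ne_nhds hpole_ne)]
      with z (hzm : z ≠ _) hz
    push_cast at hzm
    exact (Gamma_sub_pole_succ_eq m hz hzm).symm
end

section
/- For every integer n ≥ 1, the (n+1)-st derivative of the function x ↦ ln Γ(x) (real Gamma function, x > 0) evaluated at x = 1 equals (−1)^{n+1} · n! · ζ(n+1), i.e., ψ^{(n)}(1) = (−1)^{n+1} n! ζ(n+1), where ζ is the Riemann zeta function. -/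
/-!
Log-convexity of `Γ` (Bohr–Mollerup) makes `ψ = (log Γ)'` monotone on `(0, ∞)`. Squeezing
`ψ (y + N)` between values at `x + N` and `x + N + ⌈y - x⌉` shows `ψ (y + N) - ψ (x + N) → 0`,
so telescoping `ψ (x + 1) = ψ x + 1 / x` gives `ψ x - ψ 1 = ∑ₖ (1 / (k + 1) - 1 / (x + k))`.
Termwise differentiation then yields `ψ⁽ⁿ⁾ x = (-1) ^ (n + 1) n! ∑ₖ (x + k) ^ (-(n + 1))`,
which at `x = 1` is the series of `ζ (n + 1)`.
-/

open Set Filter Topology Finset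
open scoped Nat

namespace Real

noncomputable def digamma : ℝ → ℝ := deriv fun x => log (Gamma x)

variable {x y : ℝ}

lemma differentiableAt_log_Gamma (hx : 0 < x) :
    DifferentiableAt ℝ (fun y => log (Gamma y)) x :=
  (differentiableAt_Gamma fun m => ((neg_nonpos.2 m.cast_nonneg).trans_lt hx).ne').log
    (Gamma_pos_of_pos hx).ne'

lemma digamma_add_one (hx : 0 < x) : digamma (x + 1) = digamma x + x⁻¹ := by
  have log_Gamma_add_one : ∀ y : ℝ, 0 < y → log (Gamma (y + 1)) = log (Gamma y) + log y :=
    fun y hy => by rw [Gamma_add_one hy.ne', log_mul hy.ne' (Gamma_pos_of_pos hy).ne', add_comm]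
  rw [digamma, ← deriv_comp_add_const, ← deriv_log,
    ← deriv_add (differentiableAt_log_Gamma hx) (differentiableAt_log hx.ne')]
  exact EventuallyEq.deriv_eq (eventually_gt_nhds hx |>.mono log_Gamma_add_one)

lemma digamma_add_nat (hx : 0 < x) (N : ℕ) :
    digamma (x + N) = digamma x + ∑ k ∈ range N, (x + k)⁻¹ := by
  induction N with
  | zero => simp
  | succ N ih =>
    rw [Nat.cast_succ, ← add_assoc, digamma_add_one (by positivity), ih, sum_range_succ, add_assoc]

lemma monotoneOn_digamma : MonotoneOn digamma (Ioi 0) :=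
  convexOn_log_Gamma.monotoneOn_deriv fun _ hx => differentiableAt_log_Gamma hx

lemma digamma_sub_le (hx : 0 < x) (hy : 0 < y) : digamma y - digamma x ≤ ⌈y - x⌉₊ / x := by
  rcases le_total y x with hyx | hxy
  · have := monotoneOn_digamma hy hx hyx
    have : (0 : ℝ) ≤ ⌈y - x⌉₊ / x := by positivity
    linarith
  · set M := ⌈y - x⌉₊
    have hM : digamma y ≤ digamma (x + M) :=
      monotoneOn_digamma hy (by positivity : (0 : ℝ) < x + M) (by linarith [Nat.le_ceil (y - x)])
    have hsum : ∑ k ∈ range M, (x + k)⁻¹ ≤ M / x := by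
      calc ∑ k ∈ range M, (x + k)⁻¹ ≤ ∑ k ∈ range M, x⁻¹ :=
            sum_le_sum fun k _ => inv_anti₀ hx (by simp)
        _ = M / x := by simp [div_eq_mul_inv]
    rw [digamma_add_nat hx] at hM
    linarith

lemma tendsto_digamma_add_nat_sub (hx : 0 < x) (hy : 0 < y) :
    Tendsto (fun N : ℕ => digamma (y + N) - digamma (x + N)) atTop (𝓝 0) := by
  have tendsto_div (z : ℝ) (c : ℝ) : Tendsto (fun N : ℕ => c / (z + N)) atTop (𝓝 0) :=
    tendsto_const_nhds.div_atTop (tendsto_atTop_add_const_left _ _ tendsto_natCast_atTop_atTop)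
  refine tendsto_of_tendsto_of_tendsto_of_le_of_le ((tendsto_div y ⌈x - y⌉₊).neg.trans (by simp))
    (tendsto_div x ⌈y - x⌉₊) (fun N => ?_) (fun N => ?_)
  · have := digamma_sub_le (x := y + N) (y := x + N) (by positivity) (by positivity)
    rw [add_sub_add_right_eq_sub] at this
    linarith
  · have := digamma_sub_le (x := x + N) (y := y + N) (by positivity) (by positivity)
    simpa only [add_sub_add_right_eq_sub] using this

lemma summable_inv_add_nat_pow (hx : 0 < x) {p : ℕ} (hp : 2 ≤ p) :
    Summable fun k : ℕ => ((x + k) ^ p)⁻¹ := by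
  have h := (summable_one_div_nat_add_rpow x p).2 (by exact_mod_cast hp)
  refine h.congr fun k => ?_
  rw [one_div, abs_of_pos (by positivity), rpow_natCast, add_comm]

lemma summable_inv_one_add_nat_sub_inv_add_nat (hx : 0 < x) :
    Summable fun k : ℕ => (1 + k : ℝ)⁻¹ - (x + k)⁻¹ := by
  set c := min x 1
  have hc : 0 < c := lt_min hx one_pos
  refine .of_norm_bounded ((summable_inv_add_nat_pow hc le_rfl).mul_left |x - 1|) fun k => ?_
  have hck : 0 < c + k := by positivity
  have hsq : (c + k) ^ 2 ≤ (1 + k) * (x + k) := by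
    rw [sq]
    gcongr <;> simp [c]
  rw [inv_sub_inv (by positivity) (by positivity), norm_div, norm_mul, Real.norm_eq_abs,
    Real.norm_eq_abs, Real.norm_eq_abs, abs_of_pos (by positivity : (0 : ℝ) < 1 + k),
    abs_of_pos (by positivity : (0 : ℝ) < x + k), add_sub_add_right_eq_sub, div_eq_mul_inv]
  gcongr

lemma hasSum_inv_one_add_nat_sub_inv_add_nat (hx : 0 < x) :
    HasSum (fun k : ℕ => (1 + k : ℝ)⁻¹ - (x + k)⁻¹) (digamma x - digamma 1) := by
  rw [(summable_inv_one_add_nat_sub_inv_add_nat hx).hasSum_iff_tendsto_nat]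
  have partial_sum (N : ℕ) : ∑ k ∈ range N, ((1 + k : ℝ)⁻¹ - (x + k)⁻¹) =
      digamma x - digamma 1 + (digamma (1 + N) - digamma (x + N)) := by
    rw [sum_sub_distrib, digamma_add_nat one_pos, digamma_add_nat hx]
    ring
  simp only [partial_sum]
  simpa using (tendsto_digamma_add_nat_sub hx one_pos).const_add (digamma x - digamma 1)

noncomputable def hurwitzSeries (p : ℕ) (x : ℝ) : ℝ := ∑' k : ℕ, ((x + k) ^ p)⁻¹

lemma hasDerivAt_tsum_of_hasDerivAt_inv_pow {g : ℕ → ℝ → ℝ} {p : ℕ} (hp : 2 ≤ p) {a : ℝ}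
    (hg : ∀ k (z : ℝ), 0 < z → HasDerivAt (g k) (a * ((z + k) ^ p)⁻¹) z) (hx : 0 < x)
    (hgx : Summable fun k => g k x) :
    HasDerivAt (fun z => ∑' k, g k z) (a * hurwitzSeries p x) x := by
  have hx2 : 0 < x / 2 := by positivity
  have bound (k : ℕ) (z : ℝ) (hz : z ∈ Ioi (x / 2)) :
      ‖a * ((z + k) ^ p)⁻¹‖ ≤ |a| * ((x / 2 + k) ^ p)⁻¹ := by
    have hz : x / 2 < z := hz
    rw [norm_mul, Real.norm_eq_abs, norm_inv, norm_pow, Real.norm_eq_abs,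
      abs_of_pos (by linarith : 0 < z + k)]
    gcongr
  have h := hasDerivAt_tsum_of_isPreconnected
    ((summable_inv_add_nat_pow hx2 hp).mul_left |a|) isOpen_Ioi isPreconnected_Ioi
    (fun k z hz => hg k z (hx2.trans hz)) bound (by simpa using hx2 : x ∈ Ioi (x / 2)) hgx
    (by simpa using hx2 : x ∈ Ioi (x / 2))
  rwa [tsum_mul_left] at h

lemma hasDerivAt_inv_add_pow {p : ℕ} {c z : ℝ} (hz : z + c ≠ 0) :
    HasDerivAt (fun y : ℝ => ((y + c) ^ p)⁻¹) (-p * ((z + c) ^ (p + 1))⁻¹) z := by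
  refine (((hasDerivAt_id' z).add_const c).fun_pow p).fun_inv (pow_ne_zero p hz)
    |>.congr_deriv ?_
  rcases p with _ | q
  · simp
  · rw [Nat.add_sub_cancel]
    field_simp
    ring

lemma hasDerivAt_hurwitzSeries {p : ℕ} (hp : 2 ≤ p) (hx : 0 < x) :
    HasDerivAt (hurwitzSeries p) (-p * hurwitzSeries (p + 1) x) x :=
  hasDerivAt_tsum_of_hasDerivAt_inv_pow (by omega)
    (fun _ _ hz => hasDerivAt_inv_add_pow (by positivity)) hx (summable_inv_add_nat_pow hx hp)

lemma hasDerivAt_digamma (hx : 0 < x) : HasDerivAt digamma (hurwitzSeries 2 x) x := by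
  have series :
      (fun z => digamma 1 + ∑' k : ℕ, ((1 + k : ℝ)⁻¹ - (z + k)⁻¹)) =ᶠ[𝓝 x] digamma := by
    filter_upwards [eventually_gt_nhds hx] with z hz
    rw [(hasSum_inv_one_add_nat_sub_inv_add_nat hz).tsum_eq]
    ring
  have term (k : ℕ) (z : ℝ) (hz : 0 < z) :
      HasDerivAt (fun y : ℝ => (1 + k : ℝ)⁻¹ - (y + k)⁻¹) (1 * ((z + k) ^ 2)⁻¹) z := by
    have h := ((hasDerivAt_id' z).add_const (k : ℝ)).fun_inv (by positivity)
      |>.const_sub (1 + k : ℝ)⁻¹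
    simpa [div_eq_mul_inv] using h
  have h := (hasDerivAt_tsum_of_hasDerivAt_inv_pow le_rfl term hx
    (summable_inv_one_add_nat_sub_inv_add_nat hx)).const_add (digamma 1)
  rw [one_mul] at h
  exact h.congr_of_eventuallyEq series.symm

lemma iteratedDeriv_digamma {n : ℕ} (hn : 1 ≤ n) (hx : 0 < x) :
    iteratedDeriv n digamma x = (-1) ^ (n + 1) * n ! * hurwitzSeries (n + 1) x := by
  induction n, hn using Nat.le_induction generalizing x with
  | base => simpa using (hasDerivAt_digamma hx).deriv
  | succ n hn ih =>
    have h : iteratedDeriv n digamma =ᶠ[𝓝 x]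
        fun z => (-1) ^ (n + 1) * n ! * hurwitzSeries (n + 1) z :=
      (eventually_gt_nhds hx).mono fun z hz => ih hz
    rw [iteratedDeriv_succ, h.deriv_eq,
      ((hasDerivAt_hurwitzSeries (by omega) hx).const_mul ((-1) ^ (n + 1) * n ! : ℝ)).deriv]
    push_cast [Nat.factorial_succ]
    ring

lemma hurwitzSeries_one_eq_riemannZeta {p : ℕ} (hp : 1 < p) :
    (hurwitzSeries p 1 : ℂ) = riemannZeta p := by
  rw [zeta_eq_tsum_one_div_nat_add_one_cpow (by simpa using hp), hurwitzSeries,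
    Complex.ofReal_tsum]
  refine tsum_congr fun k => ?_
  push_cast
  rw [Complex.cpow_natCast, one_div, add_comm]

end Real

/-- Polygamma values at 1: `ψ⁽ⁿ⁾(1) = (-1)^(n+1) n! ζ(n+1)` for `n ≥ 1`, where `ψ⁽ⁿ⁾(1)` is
the `(n+1)`-st derivative of `x ↦ ln Γ(x)` at `x = 1`. -/
theorem polygamma_one_eq_zeta (n : ℕ) (hn : 1 ≤ n) :
    ((iteratedDeriv (n + 1) (fun x : ℝ => Real.log (Real.Gamma x)) 1 : ℝ) : ℂ)
      = (-1 : ℂ) ^ (n + 1) * (Nat.factorial n) * riemannZeta (n + 1) := by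
  rw [iteratedDeriv_succ', ← Real.digamma, Real.iteratedDeriv_digamma hn one_pos]
  push_cast
  rw [Real.hurwitzSeries_one_eq_riemannZeta (by omega), Nat.cast_succ]
end
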